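/- arXiv:1910.09101 — 3 statements merged into one kernel-verified Lean document; each statement's English description precedes it below -/
import Mathlib

section
/- For z ∈ ℂ with sin(z - kπ/8) ≠ 0 for all k coprime to 8 and cos 4z ≠ 0: Σ_{k=1}^{7} χ₈(k) cot(z - kπ/8) = -4√2 · sin(2z)/cos(4z), where χ₈ is the Kronecker symbol mod 8. -/
open Finset Real Complex

/-- The Kronecker symbol `(8/n)`. -/
noncomputable def chi8 (n : ℤ) : ℂ :=
  if n % 8 = 1 ∨ n % 8 = 7 then 1
  else if n % 8 = 3 ∨ n % 8 = 5 then -1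
  else 0

lemma cot_add_cot (a b : ℂ) (ha : Complex.sin a ≠ 0) (hb : Complex.sin b ≠ 0) :
    Complex.cos a / Complex.sin a + Complex.cos b / Complex.sin b =
      Complex.sin (a + b) / (Complex.sin a * Complex.sin b) := by
  field_simp
  rw [Complex.sin_add]; ring

lemma sin_mul_sin (a b : ℂ) :
    Complex.sin a * Complex.sin b = (Complex.cos (a - b) - Complex.cos (a + b)) / 2 := by
  have h := Complex.cos_sub_cos (a - b) (a + b)
  have h1 : ((a - b) + (a + b)) / 2 = a := by ring
  have h2 : ((a - b) - (a + b)) / 2 = -b := by ring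
  rw [h1, h2, Complex.sin_neg] at h
  rw [h]; ring

theorem stmt_17 (z : ℂ)
    (hz : ∀ k : ℤ, Int.gcd k 8 = 1 → Complex.sin (z - k * Real.pi / 8) ≠ 0)
    (hc : Complex.cos (4 * z) ≠ 0) :
    (∑ k ∈ Finset.Ico 1 8, chi8 (k : ℤ) *
        (Complex.cos (z - k * Real.pi / 8) / Complex.sin (z - k * Real.pi / 8))) =
      -4 * (Real.sqrt 2 : ℂ) * Complex.sin (2 * z) / Complex.cos (4 * z) := by
  have h1 := hz 1 (by decide)
  have h3 := hz 3 (by decide)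
  have h5 := hz 5 (by decide)
  have h7 := hz 7 (by decide)
  push_cast at h1 h3 h5 h7
  set r : ℂ := (Real.sqrt 2 : ℂ) with hrdef
  have hr2 : r ^ 2 = 2 := by
    rw [hrdef]
    norm_cast
    rw [Real.sq_sqrt]; norm_num
  have hcos4 : Complex.cos (4 * z) = 2 * Complex.cos (2 * z) ^ 2 - 1 := by
    rw [show (4:ℂ) * z = 2 * (2 * z) by ring, Complex.cos_two_mul]
  -- sum expansion
  have hsum : (∑ k ∈ Finset.Ico 1 8, chi8 (k : ℤ) *
        (Complex.cos (z - k * Real.pi / 8) / Complex.sin (z - k * Real.pi / 8))) =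
      (Complex.cos (z - 1 * Real.pi / 8) / Complex.sin (z - 1 * Real.pi / 8)
        + Complex.cos (z - 7 * Real.pi / 8) / Complex.sin (z - 7 * Real.pi / 8))
      - (Complex.cos (z - 3 * Real.pi / 8) / Complex.sin (z - 3 * Real.pi / 8)
        + Complex.cos (z - 5 * Real.pi / 8) / Complex.sin (z - 5 * Real.pi / 8)) := by
    rw [show Finset.Ico 1 8 = ({1,2,3,4,5,6,7} : Finset ℤ) by decide]
    simp [chi8]
    ring
  rw [hsum]
  -- pair 1,7
  have key : ∀ a b : ℂ, Complex.sin a ≠ 0 → Complex.sin b ≠ 0 → a + b = 2 * z - Real.pi →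
      Complex.cos a / Complex.sin a + Complex.cos b / Complex.sin b =
        -Complex.sin (2 * z) / (Complex.sin a * Complex.sin b) := by
    intro a b ha hb hab
    rw [cot_add_cot a b ha hb, hab, Complex.sin_sub, Complex.sin_pi, Complex.cos_pi]
    ring_nf
  have e17 : Complex.cos (z - 1 * Real.pi / 8) / Complex.sin (z - 1 * Real.pi / 8)
        + Complex.cos (z - 7 * Real.pi / 8) / Complex.sin (z - 7 * Real.pi / 8) =
      -Complex.sin (2 * z) / (Complex.sin (z - 1 * Real.pi / 8) * Complex.sin (z - 7 * Real.pi / 8)) :=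
    key _ _ h1 h7 (by push_cast; ring)
  have e35 : Complex.cos (z - 3 * Real.pi / 8) / Complex.sin (z - 3 * Real.pi / 8)
        + Complex.cos (z - 5 * Real.pi / 8) / Complex.sin (z - 5 * Real.pi / 8) =
      -Complex.sin (2 * z) / (Complex.sin (z - 3 * Real.pi / 8) * Complex.sin (z - 5 * Real.pi / 8)) :=
    key _ _ h3 h5 (by push_cast; ring)
  -- products
  have p17 : Complex.sin (z - 1 * Real.pi / 8) * Complex.sin (z - 7 * Real.pi / 8) =
      (2 * Complex.cos (2 * z) - r) / 4 := by
    rw [sin_mul_sin]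
    have hd : (z - 1 * (Real.pi : ℂ) / 8) - (z - 7 * Real.pi / 8) = ((3 * Real.pi / 4 : ℝ) : ℂ) := by
      push_cast; ring
    have hs : (z - 1 * (Real.pi : ℂ) / 8) + (z - 7 * Real.pi / 8) = 2 * z - Real.pi := by ring
    rw [hd, hs, ← Complex.ofReal_cos, Complex.cos_sub, Complex.sin_pi, Complex.cos_pi]
    have : Real.cos (3 * Real.pi / 4) = -(Real.sqrt 2 / 2) := by
      rw [show 3 * Real.pi / 4 = Real.pi - Real.pi / 4 by ring, Real.cos_pi_sub,
        Real.cos_pi_div_four]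
    rw [this]
    push_cast
    rw [hrdef]
    ring
  have p35 : Complex.sin (z - 3 * Real.pi / 8) * Complex.sin (z - 5 * Real.pi / 8) =
      (2 * Complex.cos (2 * z) + r) / 4 := by
    rw [sin_mul_sin]
    have hd : (z - 3 * (Real.pi : ℂ) / 8) - (z - 5 * Real.pi / 8) = ((Real.pi / 4 : ℝ) : ℂ) := by
      push_cast; ring
    have hs : (z - 3 * (Real.pi : ℂ) / 8) + (z - 5 * Real.pi / 8) = 2 * z - Real.pi := by ring
    rw [hd, hs, ← Complex.ofReal_cos, Complex.cos_sub, Complex.sin_pi, Complex.cos_pi,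
      Real.cos_pi_div_four]
    push_cast
    rw [hrdef]
    ring
  have hne17 : 2 * Complex.cos (2 * z) - r ≠ 0 := by
    intro h
    apply mul_ne_zero h1 h7
    rw [p17, h]; simp
  have hne35 : 2 * Complex.cos (2 * z) + r ≠ 0 := by
    intro h
    apply mul_ne_zero h3 h5
    rw [p35, h]; simp
  rw [e17, e35, p17, p35, hcos4]
  have hc2 : 2 * Complex.cos (2 * z) ^ 2 - 1 ≠ 0 := by rw [← hcos4]; exact hc
  field_simp
  ring_nf
  linear_combination (-Complex.sin (z*2) * r) * hr2
end

section
/- For z ∈ ℂ with sin(z - kπ/10) ≠ 0 for all k coprime to 10 and cos 5z ≠ 0: Σ_{k=1}^{9} ψ(k) cot(z - kπ/10) = -4√5 · (sin 2z · cos z)/cos 5z, where ψ is the character mod 10 with ψ ≡ 1 on {1,9} and ψ ≡ -1 on {3,7} mod 10. -/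
open Finset Real Complex

/-- The even character mod 10 induced by the Legendre symbol mod 5. -/
noncomputable def psi10 (n : ℤ) : ℂ :=
  if n % 10 = 1 ∨ n % 10 = 9 then 1
  else if n % 10 = 3 ∨ n % 10 = 7 then -1
  else 0

theorem pair_cot (z a : ℂ) (h1 : Complex.sin (z - a) ≠ 0) (h2 : Complex.sin (z + a) ≠ 0) :
    (Complex.cos (z - a) / Complex.sin (z - a) + Complex.cos (z + a) / Complex.sin (z + a)
      = 2 * Complex.sin (2 * z) / (Complex.cos (2 * a) - Complex.cos (2 * z)))
    ∧ Complex.cos (2 * a) - Complex.cos (2 * z) ≠ 0 := by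
  have key : Complex.sin (z - a) * Complex.sin (z + a) * 2
      = Complex.cos (2 * a) - Complex.cos (2 * z) := by
    rw [Complex.sin_sub, Complex.sin_add, Complex.cos_two_mul, Complex.cos_two_mul]
    linear_combination (-2 * Complex.cos z ^ 2) * Complex.sin_sq_add_cos_sq a +
      (2 * Complex.cos a ^ 2) * Complex.sin_sq_add_cos_sq z
  have dn : Complex.cos (2 * a) - Complex.cos (2 * z) ≠ 0 := by
    rw [← key]; exact mul_ne_zero (mul_ne_zero h1 h2) two_ne_zero
  refine ⟨?_, dn⟩
  have num : Complex.cos (z - a) * Complex.sin (z + a) + Complex.sin (z - a) * Complex.cos (z + a)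
      = Complex.sin (2 * z) := by
    rw [Complex.sin_sub, Complex.cos_sub, Complex.sin_add, Complex.cos_add, Complex.sin_two_mul]
    linear_combination (2 * Complex.cos z * Complex.sin z) * Complex.sin_sq_add_cos_sq a
  rw [div_add_div _ _ h1 h2, num, ← key,
    div_eq_div_iff (mul_ne_zero h1 h2) (mul_ne_zero (mul_ne_zero h1 h2) two_ne_zero)]
  ring

theorem stmt_18 (z : ℂ)
    (hz : ∀ k : ℤ, Int.gcd k 10 = 1 → Complex.sin (z - k * Real.pi / 10) ≠ 0)
    (hc : Complex.cos (5 * z) ≠ 0) :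
    (∑ k ∈ Finset.Ico 1 10, psi10 (k : ℤ) *
        (Complex.cos (z - k * Real.pi / 10) / Complex.sin (z - k * Real.pi / 10))) =
      -4 * (Real.sqrt 5 : ℂ) * (Complex.sin (2 * z) * Complex.cos z) /
        Complex.cos (5 * z) := by
  -- 1. expand the sum
  rw [show Finset.Ico (1:ℤ) 10 = ({1,2,3,4,5,6,7,8,9}:Finset ℤ) from by decide]
  rw [Finset.sum_insert (by decide), Finset.sum_insert (by decide), Finset.sum_insert (by decide),
    Finset.sum_insert (by decide), Finset.sum_insert (by decide), Finset.sum_insert (by decide),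
    Finset.sum_insert (by decide), Finset.sum_insert (by decide), Finset.sum_singleton]
  norm_num [psi10]
  -- 2. nonvanishing hypotheses
  have s1m : Complex.sin (z - (↑π:ℂ)/10) ≠ 0 := by
    have := hz 1 (by decide); push_cast at this
    convert this using 2; ring
  have s3m' : Complex.sin (z - 3*((↑π:ℂ)/10)) ≠ 0 := by
    have := hz 3 (by decide); push_cast at this
    convert this using 2 <;> ring
  have s1p : Complex.sin (z + (↑π:ℂ)/10) ≠ 0 := by
    have := hz (-1) (by decide); push_cast at this
    convert this using 2; ring
  have s3p : Complex.sin (z + 3*((↑π:ℂ)/10)) ≠ 0 := by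
    have := hz (-3) (by decide); push_cast at this
    convert this using 2 <;> ring
  -- 3. shift the k = 7, 9 terms by π
  rw [show z - 7*(↑π:ℂ)/10 = (z + 3*((↑π:ℂ)/10)) - ↑π by ring,
      show z - 9*(↑π:ℂ)/10 = (z + (↑π:ℂ)/10) - ↑π by ring,
      Complex.cos_sub_pi, Complex.sin_sub_pi, Complex.cos_sub_pi, Complex.sin_sub_pi,
      neg_div_neg_eq, neg_div_neg_eq]
  -- 4. pair up
  obtain ⟨e1, d1⟩ := pair_cot z ((↑π:ℂ)/10) s1m s1p
  obtain ⟨e3, d3⟩ := pair_cot z (3*((↑π:ℂ)/10)) s3m' s3p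
  rw [show z - 3*(↑π:ℂ)/10 = z - 3*((↑π:ℂ)/10) by ring]
  rw [show Complex.cos (z - ↑π / 10) / Complex.sin (z - ↑π / 10) +
      (-(Complex.cos (z - 3 * (↑π/10)) / Complex.sin (z - 3 * (↑π/10))) +
        (-(Complex.cos (z + 3 * (↑π / 10)) / Complex.sin (z + 3 * (↑π / 10))) +
          Complex.cos (z + ↑π / 10) / Complex.sin (z + ↑π / 10))) =
      (Complex.cos (z - ↑π/10) / Complex.sin (z - ↑π/10) +
        Complex.cos (z + ↑π/10) / Complex.sin (z + ↑π/10)) -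
      (Complex.cos (z - 3*(↑π/10)) / Complex.sin (z - 3*(↑π/10)) +
        Complex.cos (z + 3*(↑π/10)) / Complex.sin (z + 3*(↑π/10))) by ring,
    e1, e3]
  -- 5. values of the constants
  have hr : ((Real.sqrt 5 : ℝ) : ℂ)^2 = 5 := by
    rw [← Complex.ofReal_pow, Real.sq_sqrt (by norm_num)]; norm_num
  have hc1 : Complex.cos (2 * ((↑π:ℂ)/10)) = (1 + (Real.sqrt 5 : ℝ)) / 4 := by
    rw [show 2 * ((↑π:ℂ)/10) = ((π/5 : ℝ) : ℂ) by push_cast; ring,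
      ← Complex.ofReal_cos, Real.cos_pi_div_five]
    push_cast; ring
  have hc3 : Complex.cos (2 * (3*((↑π:ℂ)/10))) = (1 - (Real.sqrt 5 : ℝ)) / 4 := by
    rw [show 2 * (3*((↑π:ℂ)/10)) = ↑π - 2*(((π/5 : ℝ) : ℂ)) by push_cast; ring,
      Complex.cos_pi_sub, Complex.cos_two_mul, ← Complex.ofReal_cos, Real.cos_pi_div_five]
    push_cast
    linear_combination (-1/8 : ℂ) * hr
  -- 6. quintic identity for cos 5z
  have h5 : Complex.cos (5 * z) =
      Complex.cos z * (4 * Complex.cos (2*z)^2 - 2 * Complex.cos (2*z) - 1) := by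
    rw [show (5:ℂ) * z = 2*z + 2*z + z by ring, Complex.cos_add, Complex.cos_add,
      Complex.sin_add, Complex.cos_two_mul, Complex.sin_two_mul]
    linear_combination (-12 * Complex.cos z^3 + 4 * Complex.cos z) * Complex.sin_sq_add_cos_sq z
  -- 7. finish
  rw [hc1] at e1 d1 ⊢
  rw [hc3] at e3 d3 ⊢
  rw [h5] at hc ⊢
  have hC : Complex.cos z ≠ 0 := fun h => hc (by rw [h]; ring)
  rw [div_sub_div _ _ d1 d3, div_eq_div_iff (mul_ne_zero d1 d3) hc]
  linear_combination (-(((Real.sqrt 5:ℝ):ℂ)) * Complex.sin (2*z) * Complex.cos z / 4) * hr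
end

section
/- For z ∈ ℂ with sin(5z) ≠ 0 and sin(z - kπ/5) ≠ 0 for k = 1,2,3,4: Σ_{k=1}^{4} χ₅(k) cot(z - kπ/5) = -4√5 · (sin z · sin 2z)/sin 5z, where χ₅(k) = (k/5) is the Legendre symbol. -/
/-!
With `w = exp (2iz)` and `ζ = exp (2πi/5)` one has `cot (z - kπ/5) = i (w + ζᵏ) / (w - ζᵏ)`, and
since `ζ⁵ = 1` each of these fractions is a polynomial in `w` divided by `w⁵ - 1`. In the
`χ₅`-weighted sum the coefficient of `wʲ` becomes the twisted Gauss sum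
`∑ χ₅(k) ζ^(-jk) = χ₅(j) g` with `g = ζ - ζ² - ζ³ + ζ⁴`, so the whole sum is
`2 i g w (w - 1) (w² - 1) / (w⁵ - 1)`, which is the right-hand side written in `w`.
Finally `g = √5`, because `ζ + ζ⁴ = 2 cos (2π/5) = (√5 - 1) / 2`.
-/

open Finset Real Complex

/-- The Legendre symbol mod 5. -/
noncomputable def chi5 (n : ℤ) : ℂ :=
  if n % 5 = 1 ∨ n % 5 = 4 then 1
  else if n % 5 = 2 ∨ n % 5 = 3 then -1
  else 0

theorem sum_Ico_one_five_chi5_mul (f : ℤ → ℂ) :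
    ∑ k ∈ Ico 1 5, chi5 k * f k = f 1 - f 2 - f 3 + f 4 := by
  simp [show Ico (1 : ℤ) 5 = {1, 2, 3, 4} by decide, chi5]
  ring

section FifthRoots

variable {K : Type*} [Field K] {ζ w : K}

/-- Multiply by `(w⁵ - a⁵) / (w - a)` to get a polynomial over `w⁵ - 1`. -/
theorem add_div_sub_of_pow_five_eq_one {a : K} (ha : a ^ 5 = 1) (hw : w ^ 5 ≠ 1) :
    (w + a) / (w - a) =
      (1 + w ^ 5 + 2 * (a ^ 4 * w + a ^ 3 * w ^ 2 + a ^ 2 * w ^ 3 + a * w ^ 4)) / (w ^ 5 - 1) := by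
  have hwa : w - a ≠ 0 := fun h => hw (by rw [sub_eq_zero.mp h, ha])
  rw [div_eq_div_iff hwa (sub_ne_zero.mpr hw)]
  linear_combination (2 * w) * ha

theorem sum_legendreFive_add_div_sub (hζ : ζ ^ 5 = 1) (hw : w ^ 5 ≠ 1) :
    (w + ζ) / (w - ζ) - (w + ζ ^ 2) / (w - ζ ^ 2) - (w + ζ ^ 3) / (w - ζ ^ 3)
        + (w + ζ ^ 4) / (w - ζ ^ 4) =
      2 * (ζ - ζ ^ 2 - ζ ^ 3 + ζ ^ 4) * w * (w - 1) * (w ^ 2 - 1) / (w ^ 5 - 1) := by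
  have hpow (k : ℕ) : (ζ ^ k) ^ 5 = 1 := by rw [← pow_mul, mul_comm, pow_mul, hζ, one_pow]
  rw [add_div_sub_of_pow_five_eq_one hζ hw, add_div_sub_of_pow_five_eq_one (hpow 2) hw,
    add_div_sub_of_pow_five_eq_one (hpow 3) hw, add_div_sub_of_pow_five_eq_one (hpow 4) hw,
    ← sub_div, ← sub_div, ← add_div]
  congr 1
  -- the twisted Gauss sums `∑ χ₅(k) ζ^(jk) = χ₅(j) g`
  have twist₄ : ζ ^ 4 - ζ ^ 8 - ζ ^ 12 + ζ ^ 16 = ζ - ζ ^ 2 - ζ ^ 3 + ζ ^ 4 := by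
    linear_combination (ζ ^ 11 - ζ ^ 7 + ζ ^ 6 - ζ ^ 3 - ζ ^ 2 + ζ) * hζ
  have twist₃ : ζ ^ 3 - ζ ^ 6 - ζ ^ 9 + ζ ^ 12 = -(ζ - ζ ^ 2 - ζ ^ 3 + ζ ^ 4) := by
    linear_combination (ζ ^ 7 + ζ ^ 2 - ζ ^ 4 - ζ) * hζ
  have twist₂ : ζ ^ 2 - ζ ^ 4 - ζ ^ 6 + ζ ^ 8 = -(ζ - ζ ^ 2 - ζ ^ 3 + ζ ^ 4) := by
    linear_combination (ζ ^ 3 - ζ) * hζ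
  linear_combination 2 * w * twist₄ + 2 * w ^ 2 * twist₃ + 2 * w ^ 3 * twist₂

end FifthRoots

theorem cos_div_sin_sub_eq_exp_ratio (z a : ℂ) :
    cos (z - a) / sin (z - a) =
      I * ((cexp (2 * I * z) + cexp (2 * I * a)) / (cexp (2 * I * z) - cexp (2 * I * a))) := by
  have h : cexp (2 * I * (z - a)) = cexp (2 * I * z) / cexp (2 * I * a) := by
    rw [← Complex.exp_sub]; ring_nf
  rw [← Complex.cot_eq_cos_div_sin, cot_eq_exp_ratio, h]
  field_simp
  rw [I_sq, neg_one_mul, neg_div, ← div_neg, neg_sub]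

theorem two_mul_I_mul_sin_mul_exp (x : ℂ) :
    2 * I * sin x * cexp (I * x) = cexp (2 * I * x) - 1 := by
  have h₁ : cexp (-x * I) * cexp (I * x) = 1 := by
    rw [← Complex.exp_add]; ring_nf; exact exp_zero
  have h₂ : cexp (x * I) * cexp (I * x) = cexp (2 * I * x) := by
    rw [← Complex.exp_add]; ring_nf
  linear_combination I * cexp (I * x) * two_sin x + I ^ 2 * h₁ - I ^ 2 * h₂
    + (1 - cexp (2 * I * x)) * I_sq

theorem sin_eq_exp_sub_one_div (x : ℂ) :
    sin x = (cexp (2 * I * x) - 1) / (2 * I * cexp (I * x)) := by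
  rw [eq_div_iff (by simp [Complex.exp_ne_zero]), ← two_mul_I_mul_sin_mul_exp]
  ring

theorem exp_two_mul_I_pow_five_ne_one {z : ℂ} (hs : sin (5 * z) ≠ 0) :
    cexp (2 * I * z) ^ 5 ≠ 1 := by
  intro h
  have key := two_mul_I_mul_sin_mul_exp (5 * z)
  rw [show cexp (2 * I * (5 * z)) = cexp (2 * I * z) ^ 5 by rw [← Complex.exp_nat_mul]; ring_nf,
    h, sub_self] at key
  simp [I_ne_zero, Complex.exp_ne_zero, hs] at key

theorem sin_mul_sin_two_mul_div_sin_five_mul {z : ℂ} (hw : cexp (2 * I * z) ^ 5 ≠ 1) :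
    sin z * sin (2 * z) / sin (5 * z) =
      cexp (2 * I * z) * (cexp (2 * I * z) - 1) * (cexp (2 * I * z) ^ 2 - 1) /
        (2 * I * (cexp (2 * I * z) ^ 5 - 1)) := by
  set u := cexp (I * z)
  have hu : u ≠ 0 := Complex.exp_ne_zero _
  have hpow (n : ℕ) (y : ℂ) (hy : y = n * (I * z)) : cexp y = u ^ n := by
    rw [hy, Complex.exp_nat_mul]
  have hw' : cexp (2 * I * z) = u ^ 2 := hpow 2 _ (by push_cast; ring)
  rw [hw'] at hw ⊢
  rw [sin_eq_exp_sub_one_div, sin_eq_exp_sub_one_div, sin_eq_exp_sub_one_div, hw',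
    hpow 4 (2 * I * (2 * z)) (by push_cast; ring), hpow 2 (I * (2 * z)) (by push_cast; ring),
    hpow 10 (2 * I * (5 * z)) (by push_cast; ring), hpow 5 (I * (5 * z)) (by push_cast; ring)]
  have hw10 : u ^ 10 - 1 ≠ 0 := by
    rw [show u ^ 10 = (u ^ 2) ^ 5 by ring]; exact sub_ne_zero.mpr hw
  field_simp
  ring

theorem exp_two_pi_mul_I_div_five_pow_five : cexp (2 * π * I / 5) ^ 5 = 1 := by
  rw [← Complex.exp_nat_mul, ← exp_two_pi_mul_I]; push_cast; ring_nf

theorem exp_two_mul_I_mul_int_mul_pi_div_five (k : ℤ) :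
    cexp (2 * I * (k * π / 5)) = cexp (2 * π * I / 5) ^ k := by
  rw [← Complex.exp_int_mul]; ring_nf

theorem sqrt_five_eq_gaussSum :
    (√5 : ℂ) = cexp (2 * π * I / 5) - cexp (2 * π * I / 5) ^ 2 - cexp (2 * π * I / 5) ^ 3
      + cexp (2 * π * I / 5) ^ 4 := by
  set ζ := cexp (2 * π * I / 5)
  have hζ : ζ ^ 5 = 1 := exp_two_pi_mul_I_div_five_pow_five
  have hcos : 2 * Complex.cos (2 * (π / 5)) = ζ + ζ ^ 4 := by
    have hζ' : cexp (2 * (π / 5) * I) = ζ := by congr 1; ring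
    rw [two_cos, neg_mul, Complex.exp_neg, hζ',
      inv_eq_of_mul_eq_one_right (show ζ * ζ ^ 4 = 1 by linear_combination hζ)]
  have hsqrt_real : √5 = 4 * Real.cos (2 * (π / 5)) + 1 := by
    rw [Real.cos_two_mul, cos_pi_div_five]
    linear_combination (-1 / 2 : ℝ) * Real.sq_sqrt (show (0 : ℝ) ≤ 5 by norm_num)
  have hsqrt : (√5 : ℂ) = 2 * ζ + 2 * ζ ^ 4 + 1 := by
    rw [hsqrt_real]; push_cast; linear_combination 2 * hcos
  have hsq : (√5 : ℂ) ^ 2 = 5 := by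
    exact_mod_cast Real.sq_sqrt (show (0 : ℝ) ≤ 5 by norm_num)
  -- squaring `hsqrt` gives `1 + ζ + ζ² + ζ³ + ζ⁴ = 0`, the difference of the two sides
  linear_combination (1 - (√5 + 2 * ζ + 2 * ζ ^ 4 + 1) / 4) * hsqrt + (1 / 4) * hsq
    - (ζ ^ 3 + 2) * hζ

theorem stmt_19_general (z : ℂ)
    (hs : Complex.sin (5 * z) ≠ 0) :
    (∑ k ∈ Finset.Ico 1 5, chi5 (k : ℤ) *
        (Complex.cos (z - k * Real.pi / 5) / Complex.sin (z - k * Real.pi / 5))) =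
      -4 * (Real.sqrt 5 : ℂ) * (Complex.sin z * Complex.sin (2 * z)) /
        Complex.sin (5 * z) := by
  have hw := exp_two_mul_I_pow_five_ne_one hs
  rw [sum_Ico_one_five_chi5_mul, mul_div_assoc _ (sin z * sin (2 * z)),
    sin_mul_sin_two_mul_div_sin_five_mul hw, sqrt_five_eq_gaussSum]
  simp only [cos_div_sin_sub_eq_exp_ratio, exp_two_mul_I_mul_int_mul_pi_div_five, pow_one,
    zpow_ofNat]
  rw [← mul_sub, ← mul_sub, ← mul_add,
    sum_legendreFive_add_div_sub exp_two_pi_mul_I_div_five_pow_five hw]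
  field_simp
  rw [I_sq]
  ring

theorem stmt_19 (z : ℂ)
    (hz : ∀ k : ℤ, 1 ≤ k → k ≤ 4 → Complex.sin (z - k * Real.pi / 5) ≠ 0)
    (hs : Complex.sin (5 * z) ≠ 0) :
    (∑ k ∈ Finset.Ico 1 5, chi5 (k : ℤ) *
        (Complex.cos (z - k * Real.pi / 5) / Complex.sin (z - k * Real.pi / 5))) =
      -4 * (Real.sqrt 5 : ℂ) * (Complex.sin z * Complex.sin (2 * z)) /
        Complex.sin (5 * z) :=
  stmt_19_general z hs
end
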